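/- arXiv:2306.09856 — 4 statements merged into one kernel-verified Lean document; each statement's English description precedes it below -/
import Mathlib

section
/- For any real polynomial P of degree at most 3, denoting q̄_i = (1/h)∫_{a + i·h}^{a + (i+1)·h} P(t) dt for integer i, one has P(a + h/2) = (13/12)·q̄_0 - (1/24)·(q̄_1 + q̄_{-1}). -/
/-! The integral of a polynomial is read off its coefficients, so both sides are explicit linear
forms in the four coefficients of `P`; the weights `13/12` and `-1/24` are exactly those making
the two forms agree on `1, X, X², X³`. -/

open Polynomial Finset

theorem Polynomial.integral_eval_eq_sum_range {P : ℝ[X]} {n : ℕ} (hn : P.natDegree < n)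
    (l u : ℝ) :
    ∫ t in l..u, P.eval t = ∑ k ∈ range n, P.coeff k * ((u ^ (k + 1) - l ^ (k + 1)) / (k + 1)) := by
  simp only [eval_eq_sum_range' hn]
  rw [intervalIntegral.integral_finsetSum fun k _ =>
    (intervalIntegral.intervalIntegrable_pow k).const_mul _]
  refine sum_congr rfl fun k _ => ?_
  rw [intervalIntegral.integral_const_mul, integral_pow]

theorem stmt_5 (P : Polynomial ℝ) (hP : P.degree ≤ 3) (a h : ℝ) (hh : 0 < h)
    (qbar : ℤ → ℝ)
    (hq : ∀ i : ℤ, qbar i = (1 / h) * ∫ t in (a + i * h)..(a + (i + 1) * h), P.eval t) :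
    P.eval (a + h / 2) = (13 / 12) * qbar 0 - (1 / 24) * (qbar 1 + qbar (-1)) := by
  have hd : P.natDegree < 4 := Nat.lt_succ_of_le (natDegree_le_iff_degree_le.mpr hP)
  rw [hq 0, hq 1, hq (-1), integral_eval_eq_sum_range hd, integral_eval_eq_sum_range hd,
    integral_eval_eq_sum_range hd, eval_eq_sum_range' hd]
  simp only [sum_range_succ, sum_range_zero]
  push_cast
  field_simp
  ring
end

section
/- For any real polynomial P of degree at most 5, denoting q̄_i = (1/h)∫_{a + i·h}^{a + (i+1)·h} P(t) dt, one has P(a + h/2) = (1067/960)·q̄_0 - (29/480)·(q̄_1 + q̄_{-1}) + (3/640)·(q̄_2 + q̄_{-2}). -/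
/-! The stencil is a linear functional of the cell averages, and cell averages are linear in the
integrand, so it suffices to check exactness on the monomials `t ^ k`, `k ≤ 5`; for each of them
`∫ t ^ k = (v ^ (k + 1) - u ^ (k + 1)) / (k + 1)` turns the claim into a polynomial identity in
`a` and `h`. -/

open Polynomial Finset

noncomputable def cellAverage (f : ℝ → ℝ) (a h : ℝ) (i : ℤ) : ℝ :=
  (1 / h) * ∫ t in (a + i * h)..(a + (i + 1) * h), f t

noncomputable def sixthOrderStencil (q : ℤ → ℝ) : ℝ :=
  (1067 / 960) * q 0 - (29 / 480) * (q 1 + q (-1)) + (3 / 640) * (q 2 + q (-2))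

theorem cellAverage_sum_mul_pow (s : Finset ℕ) (c : ℕ → ℝ) (a h : ℝ) :
    cellAverage (fun t => ∑ k ∈ s, c k * t ^ k) a h
      = fun i => ∑ k ∈ s, c k * cellAverage (· ^ k) a h i := by
  funext i
  simp only [cellAverage]
  rw [intervalIntegral.integral_finsetSum, mul_sum]
  · refine sum_congr rfl fun k _ => ?_
    rw [intervalIntegral.integral_const_mul]
    ring
  · exact fun k _ => (continuous_const.mul (continuous_pow k)).intervalIntegrable _ _

theorem sixthOrderStencil_sum_mul (s : Finset ℕ) (c : ℕ → ℝ) (q : ℕ → ℤ → ℝ) :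
    sixthOrderStencil (fun i => ∑ k ∈ s, c k * q k i) = ∑ k ∈ s, c k * sixthOrderStencil (q k) := by
  simp only [sixthOrderStencil, mul_sum, ← sum_add_distrib, ← sum_sub_distrib]
  refine sum_congr rfl fun k _ => ?_
  ring

theorem sixthOrderStencil_cellAverage_pow {a h : ℝ} (hh : h ≠ 0) {k : ℕ} (hk : k < 6) :
    sixthOrderStencil (cellAverage (· ^ k) a h) = (a + h / 2) ^ k := by
  simp only [sixthOrderStencil, cellAverage, integral_pow]
  push_cast
  interval_cases k <;> field_simp <;> ring

theorem stmt_6 (P : Polynomial ℝ) (hP : P.degree ≤ 5) (a h : ℝ) (hh : 0 < h)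
    (qbar : ℤ → ℝ)
    (hq : ∀ i : ℤ, qbar i = (1 / h) * ∫ t in (a + i * h)..(a + (i + 1) * h), P.eval t) :
    P.eval (a + h / 2) = (1067 / 960) * qbar 0 - (29 / 480) * (qbar 1 + qbar (-1))
      + (3 / 640) * (qbar 2 + qbar (-2)) := by
  have hdeg : P.natDegree < 6 := Nat.lt_succ_of_le (natDegree_le_iff_degree_le.mpr hP)
  have hqbar : qbar = cellAverage (fun t => ∑ k ∈ range 6, P.coeff k * t ^ k) a h := by
    funext i
    simp only [hq, cellAverage, ← eval_eq_sum_range' hdeg]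
  change _ = sixthOrderStencil qbar
  simp only [hqbar, cellAverage_sum_mul_pow, sixthOrderStencil_sum_mul, eval_eq_sum_range' hdeg]
  exact sum_congr rfl fun k hk => by
    rw [sixthOrderStencil_cellAverage_pow hh.ne' (mem_range.mp hk)]
end

section
/- For any bivariate real polynomial Q of total degree at most 3 and any hx, hy > 0, denoting Q̄_{ij} the average of Q over the rectangle [i·hx - hx/2, i·hx + hx/2] × [j·hy - hy/2, j·hy + hy/2], one has Q(0,0) = (7/6)·Q̄_{00} - (1/24)·(Q̄_{10} + Q̄_{-1,0} + Q̄_{01} + Q̄_{0,-1}). -/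
/-!
Both sides are linear in `Q`, so it suffices to check monomials `x ^ a * y ^ b` with `a + b ≤ 3`.
Cell integrals of monomials factor into one-dimensional moments `∫ x ^ n` over the cells. On the
central cell these vanish for odd `n`, and for `n ≤ 3` the second difference of the moments over
the cells `-1, 0, 1` is `2 h ^ 3` at `n = 2` and zero otherwise. The weights `7/6 - 4/24 = 1`
then reproduce the central moments, and the `-1/24` times the second difference cancels the
`h ^ 2 / 12` that the cell average adds to the value of `x ^ 2` (resp. `y ^ 2`) at the origin.
-/

open MvPolynomial

lemma eval_fin_two_eq_sum (Q : MvPolynomial (Fin 2) ℝ) (x y : ℝ) :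
    eval ![x, y] Q = ∑ m ∈ Q.support, Q.coeff m * x ^ m 0 * y ^ m 1 := by
  simp [eval_eq', Fin.prod_univ_two, mul_assoc]

lemma integral_integral_eval_fin_two (Q : MvPolynomial (Fin 2) ℝ) (a b c d : ℝ) :
    ∫ y in c..d, ∫ x in a..b, eval ![x, y] Q =
      ∑ m ∈ Q.support, Q.coeff m * (∫ x in a..b, x ^ m 0) * ∫ y in c..d, y ^ m 1 := by
  have inner (y : ℝ) : ∫ x in a..b, eval ![x, y] Q =
      ∑ m ∈ Q.support, Q.coeff m * (∫ x in a..b, x ^ m 0) * y ^ m 1 := by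
    simp_rw [eval_fin_two_eq_sum]
    rw [intervalIntegral.integral_finsetSum fun m _ =>
      (by fun_prop : Continuous _).intervalIntegrable _ _]
    simp only [intervalIntegral.integral_mul_const, intervalIntegral.integral_const_mul]
  simp_rw [inner]
  rw [intervalIntegral.integral_finsetSum fun m _ =>
    (by fun_prop : Continuous _).intervalIntegrable _ _]
  simp only [intervalIntegral.integral_const_mul]

noncomputable def cellMoment (h : ℝ) (i : ℤ) (n : ℕ) : ℝ :=
  ∫ x in (i * h - h / 2)..(i * h + h / 2), x ^ n

lemma cellMoment_center (h : ℝ) (n : ℕ) :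
    cellMoment h 0 n = if Even n then 2 * (h / 2) ^ (n + 1) / (n + 1) else 0 := by
  rw [cellMoment, integral_pow]
  split_ifs with hn
  · simp [(hn.add_one).neg_pow]; ring
  · simp [(Nat.not_even_iff_odd.mp hn).add_one.neg_pow]

lemma cellMoment_one_add_cellMoment_neg_one {n : ℕ} (hn : n ≤ 3) (h : ℝ) :
    cellMoment h 1 n + cellMoment h (-1) n =
      2 * cellMoment h 0 n + if n = 2 then 2 * h ^ 3 else 0 := by
  interval_cases n <;> norm_num [cellMoment, integral_pow] <;> ring

lemma cellMoment_stencil_monomial {a b : ℕ} (hab : a + b ≤ 3) (hx hy : ℝ) :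
    hx * hy * (0 ^ a * 0 ^ b) =
      7 / 6 * (cellMoment hx 0 a * cellMoment hy 0 b) -
        1 / 24 * (cellMoment hx 1 a * cellMoment hy 0 b + cellMoment hx (-1) a * cellMoment hy 0 b +
          cellMoment hx 0 a * cellMoment hy 1 b + cellMoment hx 0 a * cellMoment hy (-1) b) := by
  have hx' := cellMoment_one_add_cellMoment_neg_one (n := a) (by omega) hx
  have hy' := cellMoment_one_add_cellMoment_neg_one (n := b) (by omega) hy
  have hcenter : hx * hy * (0 ^ a * 0 ^ b) =
      cellMoment hx 0 a * cellMoment hy 0 b - 1 / 24 *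
        ((if a = 2 then 2 * hx ^ 3 else 0) * cellMoment hy 0 b +
          cellMoment hx 0 a * if b = 2 then 2 * hy ^ 3 else 0) := by
    have ha : a ≤ 3 := by omega
    have hb : b ≤ 3 := by omega
    interval_cases a <;> interval_cases b <;>
      first | omega | (norm_num [cellMoment_center]; try ring)
  linear_combination hcenter + 1 / 24 * cellMoment hy 0 b * hx' + 1 / 24 * cellMoment hx 0 a * hy'

theorem stmt_11 (Q : MvPolynomial (Fin 2) ℝ) (hQ : Q.totalDegree ≤ 3)
    (hx hy : ℝ) (hhx : 0 < hx) (hhy : 0 < hy)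
    (Qbar : ℤ → ℤ → ℝ)
    (hQbar : ∀ i j : ℤ, Qbar i j = (1 / (hx * hy)) *
      ∫ y in (j * hy - hy / 2)..(j * hy + hy / 2),
        ∫ x in (i * hx - hx / 2)..(i * hx + hx / 2), MvPolynomial.eval ![x, y] Q) :
    MvPolynomial.eval ![0, 0] Q =
      (7 / 6) * Qbar 0 0 - (1 / 24) * (Qbar 1 0 + Qbar (-1) 0 + Qbar 0 1 + Qbar 0 (-1)) := by
  have hcell (i j : ℤ) : hx * hy * Qbar i j =
      ∑ m ∈ Q.support, Q.coeff m * (cellMoment hx i (m 0) * cellMoment hy j (m 1)) := by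
    rw [hQbar, ← mul_assoc, mul_one_div_cancel (by positivity), one_mul,
      integral_integral_eval_fin_two]
    simp only [cellMoment, mul_assoc]
  have hdeg {m : Fin 2 →₀ ℕ} (hm : m ∈ Q.support) : m 0 + m 1 ≤ 3 := by
    have := (Q.le_totalDegree hm).trans hQ
    rwa [Finsupp.sum_fintype _ _ fun _ => rfl, Fin.sum_univ_two] at this
  have hsum : hx * hy * eval ![0, 0] Q = hx * hy * ((7 / 6) * Qbar 0 0 -
      (1 / 24) * (Qbar 1 0 + Qbar (-1) 0 + Qbar 0 1 + Qbar 0 (-1))) := by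
    simp only [mul_sub, mul_add, mul_left_comm (hx * hy), hcell, eval_fin_two_eq_sum,
      Finset.mul_sum, ← Finset.sum_add_distrib, ← Finset.sum_sub_distrib]
    refine Finset.sum_congr rfl fun m hm => ?_
    linear_combination Q.coeff m * cellMoment_stencil_monomial (hdeg hm) hx hy
  exact mul_left_cancel₀ (by positivity) hsum
end

section
/- For any trivariate real polynomial Q of total degree at most 3 and hx, hy, hz > 0, the cell average of Q over [-hx/2, hx/2] × [-hy/2, hy/2] × [-hz/2, hz/2] equals (3/4)·Q(0,0,0) + (1/24)·(Q(hx,0,0) + Q(-hx,0,0) + Q(0,hy,0) + Q(0,-hy,0) + Q(0,0,hz) + Q(0,0,-hz)). -/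
/-!
Both sides are linear in `Q`, so it suffices to treat monomials `x ^ a * y ^ b * z ^ c` with
`a + b + c ≤ 3`. Their cell average is the product of the one-dimensional averages, and for
`k ≤ 3` the average of `x ^ k` over `[-h/2, h/2]` is `0 ^ k + δ²/24`, where `δ²` is the central
second difference of `x ^ k` at `0` with step `h` (the corrected midpoint rule, exact on cubics).
As `δ²` vanishes for `k ≤ 1`, a product of two second differences vanishes when `a + b + c ≤ 3`,
and expanding the product of the three averages leaves exactly the seven-point rule.
-/

open intervalIntegral Finset

theorem integral_integral_integral_finsetSum {ι E : Type*} [NormedAddCommGroup E]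
    [NormedSpace ℝ E] (s : Finset ι) (f : ι → ℝ × ℝ × ℝ → E)
    (hf : ∀ i ∈ s, Continuous (f i)) (a₁ b₁ a₂ b₂ a₃ b₃ : ℝ) :
    ∫ z in a₃..b₃, ∫ y in a₂..b₂, ∫ x in a₁..b₁, ∑ i ∈ s, f i (x, y, z) =
      ∑ i ∈ s, ∫ z in a₃..b₃, ∫ y in a₂..b₂, ∫ x in a₁..b₁, f i (x, y, z) := by
  have hx : ∀ y z, ∫ x in a₁..b₁, ∑ i ∈ s, f i (x, y, z) = ∑ i ∈ s, ∫ x in a₁..b₁, f i (x, y, z) :=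
    fun y z => integral_finsetSum fun i hi => ((hf i hi).comp (by fun_prop)).intervalIntegrable _ _
  have hy : ∀ z, ∫ y in a₂..b₂, ∑ i ∈ s, ∫ x in a₁..b₁, f i (x, y, z) =
      ∑ i ∈ s, ∫ y in a₂..b₂, ∫ x in a₁..b₁, f i (x, y, z) := by
    refine fun z => integral_finsetSum fun i hi => Continuous.intervalIntegrable ?_ _ _
    have := hf i hi
    fun_prop
  simp only [hx, hy]
  refine integral_finsetSum fun i hi => Continuous.intervalIntegrable ?_ _ _
  have := hf i hi
  fun_prop

theorem MvPolynomial.eval_vecCons_three {R : Type*} [CommSemiring R] (Q : MvPolynomial (Fin 3) R)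
    (x y z : R) :
    eval ![x, y, z] Q = ∑ m ∈ Q.support, Q.coeff m * (x ^ m 0 * y ^ m 1 * z ^ m 2) := by
  rw [eval_eq']
  refine sum_congr rfl fun m _ => ?_
  simp [Fin.prod_univ_three]

theorem integral_integral_integral_eval (Q : MvPolynomial (Fin 3) ℝ) (a₁ b₁ a₂ b₂ a₃ b₃ : ℝ) :
    ∫ z in a₃..b₃, ∫ y in a₂..b₂, ∫ x in a₁..b₁, MvPolynomial.eval ![x, y, z] Q =
      ∑ m ∈ Q.support, Q.coeff m * ((∫ x in a₁..b₁, x ^ m 0) * (∫ y in a₂..b₂, y ^ m 1) *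
        ∫ z in a₃..b₃, z ^ m 2) := by
  simp only [MvPolynomial.eval_vecCons_three]
  rw [integral_integral_integral_finsetSum _
    (fun m p => Q.coeff m * (p.1 ^ m 0 * p.2.1 ^ m 1 * p.2.2 ^ m 2)) (fun _ _ => by fun_prop)]
  refine sum_congr rfl fun m _ => ?_
  simp only [integral_const_mul, integral_mul_const]

theorem MvPolynomial.add_add_le_totalDegree_of_mem_support {R : Type*} [CommSemiring R]
    {Q : MvPolynomial (Fin 3) R} {m : Fin 3 →₀ ℕ} (hm : m ∈ Q.support) :
    m 0 + m 1 + m 2 ≤ Q.totalDegree := by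
  simpa [Finsupp.sum_fintype, Fin.sum_univ_three] using MvPolynomial.le_totalDegree hm

/-- Since `0 ^ k` is the value of `x ^ k` at `0` (also for `k = 0`), this is the central second
difference `p h + p (-h) - 2 * p 0` of `p x = x ^ k`. -/
def secondDiffPow (h : ℝ) (k : ℕ) : ℝ := h ^ k + (-h) ^ k - 2 * 0 ^ k

theorem secondDiffPow_of_le_one (h : ℝ) {k : ℕ} (hk : k ≤ 1) : secondDiffPow h k = 0 := by
  interval_cases k <;> norm_num [secondDiffPow]

theorem secondDiffPow_mul_secondDiffPow (h h' : ℝ) {a b : ℕ} (hab : a + b ≤ 3) :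
    secondDiffPow h a * secondDiffPow h' b = 0 := by
  rcases le_or_gt a 1 with ha | ha
  · rw [secondDiffPow_of_le_one h ha, zero_mul]
  · rw [secondDiffPow_of_le_one h' (by omega), mul_zero]

theorem integral_pow_centered (h : ℝ) {k : ℕ} (hk : k ≤ 3) :
    ∫ x in -(h / 2)..h / 2, x ^ k = h * (0 ^ k + secondDiffPow h k / 24) := by
  interval_cases k <;> simp [integral_pow, secondDiffPow] <;> ring

theorem cellAverage_monomial {hx hy hz : ℝ} (hhx : hx ≠ 0) (hhy : hy ≠ 0) (hhz : hz ≠ 0)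
    {a b c : ℕ} (habc : a + b + c ≤ 3) :
    1 / (hx * hy * hz) * ((∫ x in -(hx / 2)..hx / 2, x ^ a) * (∫ y in -(hy / 2)..hy / 2, y ^ b) *
        ∫ z in -(hz / 2)..hz / 2, z ^ c) =
      3 / 4 * (0 ^ a * 0 ^ b * 0 ^ c) + 1 / 24 * (hx ^ a * 0 ^ b * 0 ^ c + (-hx) ^ a * 0 ^ b * 0 ^ c
        + 0 ^ a * hy ^ b * 0 ^ c + 0 ^ a * (-hy) ^ b * 0 ^ c
        + 0 ^ a * 0 ^ b * hz ^ c + 0 ^ a * 0 ^ b * (-hz) ^ c) := by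
  have hδx : hx ^ a + (-hx) ^ a = secondDiffPow hx a + 2 * 0 ^ a := by rw [secondDiffPow]; ring
  have hδy : hy ^ b + (-hy) ^ b = secondDiffPow hy b + 2 * 0 ^ b := by rw [secondDiffPow]; ring
  have hδz : hz ^ c + (-hz) ^ c = secondDiffPow hz c + 2 * 0 ^ c := by rw [secondDiffPow]; ring
  have hab := secondDiffPow_mul_secondDiffPow hx hy (a := a) (b := b) (by omega)
  have hac := secondDiffPow_mul_secondDiffPow hx hz (a := a) (b := c) (by omega)
  have hbc := secondDiffPow_mul_secondDiffPow hy hz (a := b) (b := c) (by omega)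
  rw [integral_pow_centered hx (by omega), integral_pow_centered hy (by omega),
    integral_pow_centered hz (by omega)]
  rw [show ∀ A B C : ℝ, 1 / (hx * hy * hz) * (hx * A * (hy * B) * (hz * C)) = A * B * C by
    intro A B C; field_simp]
  linear_combination (0 ^ c / 576 + secondDiffPow hz c / 13824) * hab + 0 ^ b / 576 * hac
    + 0 ^ a / 576 * hbc - (0 ^ b * 0 ^ c * hδx + 0 ^ a * 0 ^ c * hδy + 0 ^ a * 0 ^ b * hδz) / 24

theorem stmt_12 (Q : MvPolynomial (Fin 3) ℝ) (hQ : Q.totalDegree ≤ 3)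
    (hx hy hz : ℝ) (hhx : 0 < hx) (hhy : 0 < hy) (hhz : 0 < hz) :
    (1 / (hx * hy * hz)) *
      (∫ z in (-(hz / 2))..(hz / 2), ∫ y in (-(hy / 2))..(hy / 2),
        ∫ x in (-(hx / 2))..(hx / 2), MvPolynomial.eval ![x, y, z] Q) =
      (3 / 4) * MvPolynomial.eval ![0, 0, 0] Q
        + (1 / 24) * (MvPolynomial.eval ![hx, 0, 0] Q + MvPolynomial.eval ![-hx, 0, 0] Q
          + MvPolynomial.eval ![0, hy, 0] Q + MvPolynomial.eval ![0, -hy, 0] Q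
          + MvPolynomial.eval ![0, 0, hz] Q + MvPolynomial.eval ![0, 0, -hz] Q) := by
  rw [integral_integral_integral_eval]
  simp only [MvPolynomial.eval_vecCons_three, mul_sum, ← sum_add_distrib]
  refine sum_congr rfl fun m hm => ?_
  have hdeg := (MvPolynomial.add_add_le_totalDegree_of_mem_support hm).trans hQ
  linear_combination Q.coeff m * cellAverage_monomial hhx.ne' hhy.ne' hhz.ne' hdeg
end
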